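/- Let q ≥ 1, let G_q = (V_q, E_q) be the graph with vertices s₁,…,s_q, v₁,…,v_q, t₁,…,t_q and edges {s_i, v_j} and {v_i, t_j} for all i, j ∈ {1,…,q}, with every edge of cost 1, and let 𝒫_q consist of the pairs {s_i, t_i} for 1 ≤ i ≤ q and {v_i, v_{i+1}} for 1 ≤ i ≤ q−1. Then there exists a feasible solution (x,z) to Forest-BCR supported on G_q, for the instance (G_q, 1, 𝒫_q), with cost c(x) = 2q. -/

import Mathlib

open Finset

noncomputable section

variable {V : Type*}

/-- The set of terminals: vertices occurring in some pair of `P`. -/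
def terminals [Fintype V] [DecidableEq V] (P : Finset (Finset V)) : Finset V :=
  Finset.univ.filter fun v => ∃ p ∈ P, v ∈ p

/-- Feasibility for the Forest-BCR linear program: `x r u v` is the value of the
variable `x^r_{(u,v)}` and `z r p` is the value of `z^r_P`. -/
def ForestBCRFeasible [Fintype V] [DecidableEq V] (P : Finset (Finset V))
    (x : V → V → V → ℝ) (z : V → Finset V → ℝ) : Prop :=
  (∀ r u v : V, u ≠ v → 0 ≤ x r u v) ∧
  (∀ r : V, ∀ p ∈ P, 0 ≤ z r p) ∧
  (∀ p ∈ P, ∑ r : V, z r p = 1) ∧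
  (∀ r : V, ∀ p ∈ P, ∀ U : Finset V, r ∉ U → (p ∩ U).Nonempty →
    z r p ≤ ∑ u ∈ U, ∑ v ∈ Uᶜ, x r u v)

/-- The cost `c(x)` of a Forest-BCR solution. -/
def bcrCost [Fintype V] [DecidableEq V] (c : V → V → ℝ) (x : V → V → V → ℝ) : ℝ :=
  ∑ r : V, ∑ u : V, ∑ v ∈ Finset.univ.erase u, c u v * x r u v

/-- Half-integrality of a Forest-BCR solution. -/
def HalfIntegralSol [Fintype V] [DecidableEq V] (P : Finset (Finset V))
    (x : V → V → V → ℝ) (z : V → Finset V → ℝ) : Prop :=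
  (∀ r u v : V, u ≠ v → ∃ n : ℤ, x r u v = n / 2) ∧
  (∀ r : V, ∀ p ∈ P, ∃ n : ℤ, z r p = n / 2)

/-- The solution `x` is supported on the graph `G`. -/
def SupportedOn (G : SimpleGraph V) (x : V → V → V → ℝ) : Prop :=
  ∀ r u v : V, u ≠ v → ¬ G.Adj u v → x r u v = 0

/-- The graph `G_q` on vertices `(0, i) = s_i`, `(1, i) = v_i`, `(2, i) = t_i`
(for `i : Fin q`), whose edges are all pairs `{s_i, v_j}` and `{v_i, t_j}`. -/
def gridGraph (q : ℕ) : SimpleGraph (Fin 3 × Fin q) where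
  Adj a b := (a.1 = 0 ∧ b.1 = 1) ∨ (a.1 = 1 ∧ b.1 = 0) ∨
    (a.1 = 1 ∧ b.1 = 2) ∨ (a.1 = 2 ∧ b.1 = 1)
  symm := by constructor; intro a b h; tauto
  loopless := by
    constructor; intro a h
    rcases h with ⟨h1, h2⟩ | ⟨h1, h2⟩ | ⟨h1, h2⟩ | ⟨h1, h2⟩ <;>
      exact absurd (h1.symm.trans h2) (by decide)

/-- The pairs `𝒫_q`: `{s_i, t_i}` for `i : Fin q`, and `{v_i, v_{i+1}}` for `i + 1 < q`. -/
def pairsQ (q : ℕ) : Finset (Finset (Fin 3 × Fin q)) :=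
  (Finset.univ.image fun i : Fin q =>
    ({((0 : Fin 3), i), ((2 : Fin 3), i)} : Finset (Fin 3 × Fin q))) ∪
  ((Finset.univ.filter fun i : Fin q => (i : ℕ) + 1 < q).attach.image fun i =>
    ({((1 : Fin 3), i.1),
      ((1 : Fin 3), (⟨(i.1 : ℕ) + 1, by have h := i.2; rw [Finset.mem_filter] at h; exact h.2⟩ : Fin q))} :
      Finset (Fin 3 × Fin q)))

/-! ### Auxiliary definitions for the explicit fractional solution -/

/-- The value `1/(2q)`. -/
def aQ (q : ℕ) : ℝ := 1 / (2 * q)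

/-- The explicit fractional solution `x`.  For a root `r = s_i` (resp. `t_i`) we put
value `1/(2q)` on every edge `t_i → v_j` (resp. `s_i → v_j`) and every edge
`v_j → r`.  Roots `v_i` carry no mass. -/
def xsol (q : ℕ) (r u v : Fin 3 × Fin q) : ℝ :=
  (if r.1 ≠ 1 ∧ u = (2 - r.1, r.2) ∧ v.1 = 1 then aQ q else 0) +
  (if r.1 ≠ 1 ∧ u.1 = 1 ∧ v = r then aQ q else 0)

/-- The explicit fractional solution `z`: the pair `{s_i, t_i}` gets `1/2` at each of
its two endpoints, each `v`-pair gets `1/(2q)` at every root `s_i` and `t_i`. -/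
def zsol (q : ℕ) (r : Fin 3 × Fin q) (p : Finset (Fin 3 × Fin q)) : ℝ :=
  (if r.1 ≠ 1 ∧ ((0:Fin 3), r.2) ∈ p ∧ ((2:Fin 3), r.2) ∈ p then 1/2 else 0) +
  (if r.1 ≠ 1 ∧ ∀ a ∈ p, a.1 = (1:Fin 3) then aQ q else 0)

lemma aQ_nonneg (q : ℕ) : 0 ≤ aQ q := by unfold aQ; positivity

lemma xsol_nonneg (q : ℕ) (r u v : Fin 3 × Fin q) : 0 ≤ xsol q r u v := by
  unfold xsol
  have := aQ_nonneg q
  split_ifs <;> linarith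

lemma two_sub_ne_one : ∀ c : Fin 3, c ≠ 1 → 2 - c ≠ 1 := by decide

lemma fin3_ne_cases : ∀ c : Fin 3, c ≠ 1 → c = 0 ∨ c = 2 := by decide

lemma two_sub_eq_zero : ∀ c : Fin 3, c ≠ 1 → c ≠ 0 → 2 - c = 0 := by decide

lemma two_sub_eq_two : ∀ c : Fin 3, c ≠ 1 → c ≠ 2 → 2 - c = 2 := by decide

lemma fin3_zero_ne_one : (0 : Fin 3) ≠ 1 := by decide

lemma mem_pairsQ {q : ℕ} {p : Finset (Fin 3 × Fin q)} (hp : p ∈ pairsQ q) :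
    (∃ i : Fin q, p = {((0:Fin 3), i), ((2:Fin 3), i)}) ∨
    (∃ (j : Fin q) (h : (j:ℕ)+1 < q),
      p = {((1:Fin 3), j), ((1:Fin 3), (⟨(j:ℕ)+1, h⟩ : Fin q))}) := by
  unfold pairsQ at hp
  rcases Finset.mem_union.1 hp with h | h
  · obtain ⟨i, _, rfl⟩ := Finset.mem_image.1 h
    exact Or.inl ⟨i, rfl⟩
  · obtain ⟨i, _, rfl⟩ := Finset.mem_image.1 h
    have h2 := i.2
    rw [Finset.mem_filter] at h2
    exact Or.inr ⟨i.1, h2.2, rfl⟩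

/-- Generic lower bound on a cut sum from an injective family of crossing pairs. -/
lemma cut_ge_card {q : ℕ} {W : Type*} [Fintype W] [DecidableEq W]
    (x : W → W → ℝ) (hx : ∀ u v, 0 ≤ x u v) (U : Finset W)
    (g : Fin q → W × W) (hginj : Function.Injective g)
    (hmem : ∀ j, (g j).1 ∈ U ∧ (g j).2 ∉ U) (a : ℝ)
    (hval : ∀ j, a ≤ x (g j).1 (g j).2) :
    (q : ℝ) * a ≤ ∑ u ∈ U, ∑ v ∈ Uᶜ, x u v := by
  have h1 : ∑ u ∈ U, ∑ v ∈ Uᶜ, x u v = ∑ p ∈ U ×ˢ Uᶜ, x p.1 p.2 := by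
    rw [Finset.sum_product]
  have h2 : (Finset.univ.image g) ⊆ U ×ˢ Uᶜ := by
    intro p hp
    obtain ⟨j, _, rfl⟩ := Finset.mem_image.1 hp
    exact Finset.mem_product.2 ⟨(hmem j).1, Finset.mem_compl.2 (hmem j).2⟩
  have h3 : ∑ p ∈ Finset.univ.image g, x p.1 p.2 ≤ ∑ p ∈ U ×ˢ Uᶜ, x p.1 p.2 :=
    Finset.sum_le_sum_of_subset_of_nonneg h2 (fun p _ _ => hx _ _)
  have h4 : ∑ p ∈ Finset.univ.image g, x p.1 p.2 = ∑ j : Fin q, x (g j).1 (g j).2 :=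
    Finset.sum_image (fun a _ b _ h => hginj h)
  have h5 : (q : ℝ) * a ≤ ∑ j : Fin q, x (g j).1 (g j).2 := by
    calc (q : ℝ) * a = ∑ _j : Fin q, a := by
          simp [Finset.sum_const, mul_comm]
      _ ≤ _ := Finset.sum_le_sum (fun j _ => hval j)
  rw [h1]; rw [h4] at h3; linarith

/-- A single crossing pair bounds the cut sum from below. -/
lemma cut_ge_single {W : Type*} [Fintype W] [DecidableEq W]
    (x : W → W → ℝ) (hx : ∀ u v, 0 ≤ x u v) (U : Finset W)
    (u0 v0 : W) (hu : u0 ∈ U) (hv : v0 ∉ U) :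
    x u0 v0 ≤ ∑ u ∈ U, ∑ v ∈ Uᶜ, x u v := by
  calc x u0 v0 ≤ ∑ v ∈ Uᶜ, x u0 v :=
        Finset.single_le_sum (fun v _ => hx u0 v) (Finset.mem_compl.2 hv)
    _ ≤ ∑ u ∈ U, ∑ v ∈ Uᶜ, x u v :=
        Finset.single_le_sum (fun u _ => Finset.sum_nonneg fun v _ => hx u v) hu

/-- For the unit-cost instance `(G_q, 1, 𝒫_q)` there is a feasible
Forest-BCR solution supported on `G_q` of cost exactly `2q`. -/
theorem gap_instance_fractional_solution (q : ℕ) (hq : 1 ≤ q) :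
    ∃ (x : Fin 3 × Fin q → Fin 3 × Fin q → Fin 3 × Fin q → ℝ)
      (z : Fin 3 × Fin q → Finset (Fin 3 × Fin q) → ℝ),
      ForestBCRFeasible (pairsQ q) x z ∧
      SupportedOn (gridGraph q) x ∧
      bcrCost (fun _ _ => (1 : ℝ)) x = 2 * q := by
  have hq0 : (q : ℝ) ≠ 0 := Nat.cast_ne_zero.2 (by omega)
  refine ⟨xsol q, zsol q, ⟨?_, ?_, ?_, ?_⟩, ?_, ?_⟩
  · -- nonnegativity of x
    intro r u v _
    exact xsol_nonneg q r u v
  · -- nonnegativity of z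
    intro r p _
    unfold zsol
    have := aQ_nonneg q
    split_ifs <;> simp [this] <;> linarith
  · -- z sums to 1
    intro p hp
    rcases mem_pairsQ hp with ⟨i, rfl⟩ | ⟨j, hj, rfl⟩
    · have hno : ¬ (∀ a ∈ ({((0:Fin 3), i), ((2:Fin 3), i)} : Finset (Fin 3 × Fin q)),
          a.1 = (1:Fin 3)) := fun h => fin3_zero_ne_one (h ((0:Fin 3), i) (by simp))
      have key : ∀ r : Fin 3 × Fin q,
          zsol q r ({((0:Fin 3), i), ((2:Fin 3), i)} : Finset (Fin 3 × Fin q)) =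
          (if r = ((0:Fin 3), i) then (1:ℝ)/2 else 0) +
          (if r = ((2:Fin 3), i) then (1:ℝ)/2 else 0) := by
        rintro ⟨c, k⟩
        unfold zsol
        have h2 : (if (c, k).1 ≠ 1 ∧ ∀ a ∈ ({((0:Fin 3), i), ((2:Fin 3), i)} :
            Finset (Fin 3 × Fin q)), a.1 = (1:Fin 3) then aQ q else 0) = 0 :=
          if_neg (fun h => hno h.2)
        rw [h2, add_zero]
        fin_cases c <;> by_cases hk : k = i <;> simp [Prod.ext_iff, hk]
      calc ∑ r : Fin 3 × Fin q, zsol q r _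
          = ∑ r : Fin 3 × Fin q,
            ((if r = ((0:Fin 3), i) then (1:ℝ)/2 else 0) +
             (if r = ((2:Fin 3), i) then (1:ℝ)/2 else 0)) :=
            Finset.sum_congr rfl (fun r _ => key r)
        _ = 1 := by
            rw [Finset.sum_add_distrib, Finset.sum_ite_eq', Finset.sum_ite_eq']
            norm_num
    · have hall : ∀ a ∈ ({((1:Fin 3), j), ((1:Fin 3), (⟨(j:ℕ)+1, hj⟩ : Fin q))} :
            Finset (Fin 3 × Fin q)), a.1 = (1:Fin 3) := by
        intro a ha
        rcases Finset.mem_insert.1 ha with h | h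
        · rw [h]
        · rw [Finset.mem_singleton] at h; rw [h]
      have key : ∀ r : Fin 3 × Fin q,
          zsol q r ({((1:Fin 3), j), ((1:Fin 3), (⟨(j:ℕ)+1, hj⟩ : Fin q))} :
            Finset (Fin 3 × Fin q)) =
          (if r.1 ≠ 1 then aQ q else 0) := by
        rintro ⟨c, k⟩
        unfold zsol
        have hn0 : ((0:Fin 3), k) ∉
            ({((1:Fin 3), j), ((1:Fin 3), (⟨(j:ℕ)+1, hj⟩ : Fin q))} :
            Finset (Fin 3 × Fin q)) := by
          simp [Prod.ext_iff]
        rw [if_neg (fun h => hn0 h.2.1), zero_add]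
        simp [hall]
      calc ∑ r : Fin 3 × Fin q, zsol q r _
          = ∑ r : Fin 3 × Fin q, (if r.1 ≠ 1 then aQ q else 0) :=
            Finset.sum_congr rfl (fun r _ => key r)
        _ = 1 := by
            rw [Fintype.sum_prod_type, Fin.sum_univ_three]
            simp [Finset.sum_const, Finset.card_univ]
            unfold aQ
            field_simp
            ring
  · -- cut constraints
    intro r p hp U hrU hPU
    obtain ⟨u0, hu0⟩ := hPU
    have hu0p : u0 ∈ p := (Finset.mem_inter.1 hu0).1
    have hu0U : u0 ∈ U := (Finset.mem_inter.1 hu0).2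
    have hsum_nonneg : (0:ℝ) ≤ ∑ u ∈ U, ∑ v ∈ Uᶜ, xsol q r u v :=
      Finset.sum_nonneg fun u _ => Finset.sum_nonneg fun v _ => xsol_nonneg q r u v
    rcases mem_pairsQ hp with ⟨i, rfl⟩ | ⟨j, hj, rfl⟩
    · -- pair {s_i, t_i}
      by_cases hc : r.1 ≠ 1 ∧ r.2 = i
      · -- root is s_i or t_i
        obtain ⟨c, k⟩ := r
        simp only at hc
        obtain ⟨hc1, rfl⟩ := hc
        have hz : zsol q (c, k) ({((0:Fin 3), k), ((2:Fin 3), k)} : Finset (Fin 3 × Fin q))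
            = 1/2 := by
          unfold zsol
          have hno : ¬ (∀ a ∈ ({((0:Fin 3), k), ((2:Fin 3), k)} : Finset (Fin 3 × Fin q)),
              a.1 = (1:Fin 3)) := fun h => fin3_zero_ne_one (h ((0:Fin 3), k) (by simp))
          simp [hc1, hno]
        rw [hz]
        -- the partner vertex (2 - c, k) is in U
        have hw : ((2 - c : Fin 3), k) ∈ U := by
          rcases Finset.mem_insert.1 hu0p with h | h
          · -- u0 = (0, k)
            subst h
            have hc0 : c ≠ 0 := by rintro rfl; exact hrU hu0U
            rw [two_sub_eq_zero c hc1 hc0]; exact hu0U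
          · rw [Finset.mem_singleton] at h
            subst h
            have hc2 : c ≠ 2 := by rintro rfl; exact hrU hu0U
            rw [two_sub_eq_two c hc1 hc2]; exact hu0U
        -- crossing family indexed by the middle column
        set g : Fin q → (Fin 3 × Fin q) × (Fin 3 × Fin q) := fun m =>
          if ((1:Fin 3), m) ∈ U then (((1:Fin 3), m), ((c:Fin 3), k))
          else (((2 - c : Fin 3), k), ((1:Fin 3), m)) with hg
        have h21 : (2 - c : Fin 3) ≠ 1 := two_sub_ne_one c hc1
        have hginj : Function.Injective g := by
          intro m m' h
          rw [hg] at h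
          simp only at h
          split_ifs at h with h1 h2 h2
          · exact congrArg (fun p => p.1.2) h
          · exact absurd (congrArg (fun p => p.1.1) h).symm h21
          · exact absurd (congrArg (fun p => p.1.1) h) h21
          · exact congrArg (fun p => p.2.2) h
        have hmem : ∀ m, (g m).1 ∈ U ∧ (g m).2 ∉ U := by
          intro m
          rw [hg]
          simp only
          split_ifs with h1
          · exact ⟨h1, hrU⟩
          · exact ⟨hw, h1⟩
        have hval : ∀ m, aQ q ≤ xsol q ((c : Fin 3), k) (g m).1 (g m).2 := by
          intro m
          rw [hg]
          simp only
          split_ifs with h1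
          · unfold xsol
            simp [hc1, Prod.ext_iff, h21]
          · unfold xsol
            simp [hc1, Prod.ext_iff, h21]
        have := cut_ge_card (xsol q ((c : Fin 3), k)) (xsol_nonneg q _) U g hginj hmem
          (aQ q) hval
        have haq : (q : ℝ) * aQ q = 1/2 := by unfold aQ; field_simp
        linarith [this]
      · -- z vanishes
        have hz : zsol q r ({((0:Fin 3), i), ((2:Fin 3), i)} : Finset (Fin 3 × Fin q))
            = 0 := by
          unfold zsol
          have hno : ¬ (∀ a ∈ ({((0:Fin 3), i), ((2:Fin 3), i)} : Finset (Fin 3 × Fin q)),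
              a.1 = (1:Fin 3)) := fun h => fin3_zero_ne_one (h ((0:Fin 3), i) (by simp))
          have hno2 : ¬ (r.1 ≠ 1 ∧ ((0:Fin 3), r.2) ∈
              ({((0:Fin 3), i), ((2:Fin 3), i)} : Finset (Fin 3 × Fin q)) ∧
              ((2:Fin 3), r.2) ∈
              ({((0:Fin 3), i), ((2:Fin 3), i)} : Finset (Fin 3 × Fin q))) := by
            rintro ⟨h1, h2, h3⟩
            apply hc
            refine ⟨h1, ?_⟩
            rcases Finset.mem_insert.1 h2 with h | h
            · exact (Prod.ext_iff.1 h).2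
            · rw [Finset.mem_singleton] at h
              exact absurd (Prod.ext_iff.1 h).1 (by decide : ((0:Fin 3) : Fin 3) ≠ 2)
          simp only [hno, hno2, if_false, and_false, false_and, add_zero]
        rw [hz]
        exact hsum_nonneg
    · -- pair {v_j, v_{j+1}}
      by_cases hc1 : r.1 ≠ 1
      · have hz : zsol q r ({((1:Fin 3), j), ((1:Fin 3), (⟨(j:ℕ)+1, hj⟩ : Fin q))} :
            Finset (Fin 3 × Fin q)) = aQ q := by
          unfold zsol
          have hall : ∀ a ∈ ({((1:Fin 3), j), ((1:Fin 3), (⟨(j:ℕ)+1, hj⟩ : Fin q))} :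
              Finset (Fin 3 × Fin q)), a.1 = (1:Fin 3) := by
            intro a ha
            rcases Finset.mem_insert.1 ha with h | h
            · rw [h]
            · rw [Finset.mem_singleton] at h; rw [h]
          have hn0 : ((0:Fin 3), r.2) ∉
              ({((1:Fin 3), j), ((1:Fin 3), (⟨(j:ℕ)+1, hj⟩ : Fin q))} :
              Finset (Fin 3 × Fin q)) := by
            simp [Prod.ext_iff]
          simp [hall, hn0, hc1]
        rw [hz]
        -- u0 has first coordinate 1, and the edge u0 → r carries aQ q
        have hu01 : u0.1 = (1 : Fin 3) := by
          rcases Finset.mem_insert.1 hu0p with h | h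
          · rw [h]
          · rw [Finset.mem_singleton] at h; rw [h]
        have hxval : xsol q r u0 r = aQ q := by
          unfold xsol
          have h21 : (2 - r.1 : Fin 3) ≠ 1 := two_sub_ne_one r.1 hc1
          have hfalse : ¬ (r.1 ≠ 1 ∧ u0 = ((2 - r.1 : Fin 3), r.2) ∧ r.1 = 1) := by
            rintro ⟨h1, _, h3⟩; exact h1 h3
          have hfirst : ¬ (u0 = ((2 - r.1 : Fin 3), r.2)) := by
            intro h
            rw [h] at hu01
            exact h21 hu01
          simp [hc1, hfirst, hu01]
        calc aQ q = xsol q r u0 r := hxval.symm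
          _ ≤ _ := cut_ge_single (xsol q r) (xsol_nonneg q r) U u0 r hu0U hrU
      · push_neg at hc1
        have hz : zsol q r ({((1:Fin 3), j), ((1:Fin 3), (⟨(j:ℕ)+1, hj⟩ : Fin q))} :
            Finset (Fin 3 × Fin q)) = 0 := by
          unfold zsol
          simp [hc1]
        rw [hz]
        exact hsum_nonneg
  · -- supported on the grid graph
    intro r u v _ hadj
    unfold xsol
    have h1 : ¬ (r.1 ≠ 1 ∧ u = ((2 - r.1 : Fin 3), r.2) ∧ v.1 = 1) := by
      rintro ⟨hr, rfl, hv⟩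
      apply hadj
      show _ ∨ _ ∨ _ ∨ _
      rcases fin3_ne_cases (2 - r.1) (two_sub_ne_one r.1 hr) with h | h
      · exact Or.inl ⟨h, hv⟩
      · exact Or.inr (Or.inr (Or.inr ⟨h, hv⟩))
    have h2 : ¬ (r.1 ≠ 1 ∧ u.1 = 1 ∧ v = r) := by
      rintro ⟨hr, hu, hvr⟩
      apply hadj
      show _ ∨ _ ∨ _ ∨ _
      rcases fin3_ne_cases r.1 hr with h | h
      · exact Or.inr (Or.inl ⟨hu, by rw [hvr, h]⟩)
      · exact Or.inr (Or.inr (Or.inl ⟨hu, by rw [hvr, h]⟩))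
    simp [h1, h2]
  · -- the cost is 2q
    unfold bcrCost
    have hdiag : ∀ r u : Fin 3 × Fin q, xsol q r u u = 0 := by
      intro r u
      unfold xsol
      have h1 : ¬ (r.1 ≠ 1 ∧ u = ((2 - r.1 : Fin 3), r.2) ∧ u.1 = 1) := by
        rintro ⟨hr, rfl, hu⟩
        exact two_sub_ne_one r.1 hr hu
      have h2 : ¬ (r.1 ≠ 1 ∧ u.1 = 1 ∧ u = r) := by
        rintro ⟨hr, hu, hur⟩
        rw [hur] at hu
        exact hr hu
      simp [h1, h2]
    have herase : ∀ r u : Fin 3 × Fin q,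
        ∑ v ∈ Finset.univ.erase u, (1:ℝ) * xsol q r u v
          = ∑ v : Fin 3 × Fin q, xsol q r u v := by
      intro r u
      simp only [one_mul]
      exact Finset.sum_erase _ (hdiag r u)
    calc ∑ r : Fin 3 × Fin q, ∑ u : Fin 3 × Fin q,
          ∑ v ∈ Finset.univ.erase u, (1:ℝ) * xsol q r u v
        = ∑ r : Fin 3 × Fin q, ∑ u : Fin 3 × Fin q, ∑ v : Fin 3 × Fin q, xsol q r u v := by
          refine Finset.sum_congr rfl fun r _ => Finset.sum_congr rfl fun u _ => herase r u
      _ = 2 * q := by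
          have hinner : ∀ r : Fin 3 × Fin q,
              ∑ u : Fin 3 × Fin q, ∑ v : Fin 3 × Fin q, xsol q r u v
                = (if r.1 ≠ 1 then 1 else 0) := by
            intro r
            unfold xsol
            rw [Finset.sum_comm]
            by_cases hr : r.1 ≠ 1
            · simp only [eq_true hr, true_and, if_true]
              have : ∀ v : Fin 3 × Fin q,
                  ∑ u : Fin 3 × Fin q,
                    ((if u = ((2 - r.1 : Fin 3), r.2) ∧ v.1 = 1 then aQ q else 0) +
                     (if u.1 = 1 ∧ v = r then aQ q else 0))
                  = (if v.1 = 1 then aQ q else 0) + (if v = r then (q : ℝ) * aQ q else 0) := by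
                intro v
                rw [Finset.sum_add_distrib]
                congr 1
                · by_cases hv : v.1 = 1
                  · simp only [hv, and_true]
                    rw [Finset.sum_ite_eq']
                    simp
                  · simp [hv]
                · by_cases hv : v = r
                  · simp only [hv, and_true]
                    rw [Fintype.sum_prod_type, Fin.sum_univ_three]
                    simp [Finset.sum_const, Finset.card_univ]
                    try norm_num
                    try ring
                  · simp [hv]
              rw [Finset.sum_congr rfl fun v _ => this v]
              rw [Finset.sum_add_distrib, Finset.sum_ite_eq']
              have hsv : ∑ v : Fin 3 × Fin q, (if v.1 = (1:Fin 3) then aQ q else 0)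
                  = (q : ℝ) * aQ q := by
                rw [Fintype.sum_prod_type, Fin.sum_univ_three]
                simp [Finset.sum_const, Finset.card_univ]
                try norm_num
                try ring
              rw [hsv]
              simp only [Finset.mem_univ, if_true]
              have : (q : ℝ) * aQ q = 1/2 := by unfold aQ; field_simp
              rw [this]; norm_num
            · push_neg at hr
              simp [hr]
          rw [Finset.sum_congr rfl fun r _ => hinner r]
          rw [Fintype.sum_prod_type, Fin.sum_univ_three]
          have e0 : ((0:Fin 3) ≠ 1) := by decide
          have e2 : ((2:Fin 3) ≠ 1) := by decide
          simp only [e0, e2, ne_eq, not_true_eq_false, not_false_eq_true, if_true,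
            if_false, ite_true, ite_false, Finset.sum_const, Finset.card_univ,
            Fintype.card_fin, nsmul_eq_mul, mul_one, Finset.sum_ite_irrel]
          ring

end
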